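/- Let G be a bipartite graph with κ(G) = k ≥ 1 and at least three vertices, let uv be a bisimplicial edge, and let S be a vertex cut of G ⊖ uv with |S| = k − 1. Then N_G(u)\{v} = S or N_G(v)\{u} = S. -/

import Mathlib

open SimpleGraph

variable {V : Type*}

/-- `S` is a vertex cut set of `G`: deleting the vertices of `S` disconnects the graph. -/
def SimpleGraph.IsVertexCutSet (G : SimpleGraph V) (S : Set V) : Prop :=
  ¬ (G.induce Sᶜ).Preconnected

open scoped Classical in
/-- The vertex connectivity of a finite simple graph: the minimum size of a vertex cut if
one exists (i.e. if the graph is not complete), and `|V| - 1` otherwise. -/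
noncomputable def SimpleGraph.vertexConnectivity [Finite V] (G : SimpleGraph V) : ℕ :=
  if ∃ S : Set V, G.IsVertexCutSet S then
    sInf {n | ∃ S : Set V, S.ncard = n ∧ G.IsVertexCutSet S}
  else Nat.card V - 1

/-- An edge `uv` is bisimplicial if `N(u) ∪ N(v)` induces a complete bipartite graph
with parts `N(u)` and `N(v)`. -/
def SimpleGraph.IsBisimplicialEdge (G : SimpleGraph V) (u v : V) : Prop :=
  G.Adj u v ∧ ∀ x y, G.Adj u x → G.Adj v y → x ≠ y → G.Adj x y

/-- A cycle (closed walk) has a chord: an edge of `G` joining two vertices of the cycle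
that is not an edge of the cycle. -/
def SimpleGraph.CycleHasChord (G : SimpleGraph V) {a : V} (c : G.Walk a a) : Prop :=
  ∃ x y, x ∈ c.support ∧ y ∈ c.support ∧ G.Adj x y ∧ s(x, y) ∉ c.edges

/-- A graph is chordal bipartite if it is bipartite and every cycle of length at least 6
has a chord. -/
def SimpleGraph.ChordalBipartite (G : SimpleGraph V) : Prop :=
  G.Colorable 2 ∧ ∀ ⦃a : V⦄ (c : G.Walk a a), c.IsCycle → 6 ≤ c.length → G.CycleHasChord c

/-!
Write `W` for the vertices outside `{u, v} ∪ S`. If `u` has no neighbour in `W`, then `N(u)` separates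
`u` from any vertex of `W` (which is nonempty since `G[W]` is disconnected), so `k ≤ |N(u)|`; as
`N(u) \ {v} ⊆ S` and `|S| = k - 1`, this forces `N(u) \ {v} = S`. Symmetrically for `v`. If both
`u` and `v` have neighbours `x, y ∈ W`, bisimpliciality puts every `W`-neighbour of `u` or `v` in
the component of `x` in `G[W]`; any path in `G - S` from a vertex of `W` to `u` leaves `W` through
such a neighbour, so if `G - S` were connected, so would be `G[W]`. Hence `S` is a vertex cut of
size `k - 1 < k`, which is impossible.
-/

namespace SimpleGraph

variable {G : SimpleGraph V}

lemma vertexConnectivity_le_ncard [Finite V] {S : Set V} (h : G.IsVertexCutSet S) :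
    G.vertexConnectivity ≤ S.ncard := by
  classical
  rw [vertexConnectivity, if_pos ⟨S, h⟩]
  exact Nat.sInf_le ⟨S, rfl, h⟩

lemma isVertexCutSet_neighborSet {a w : V} (hne : a ≠ w) (hnadj : ¬ G.Adj a w) :
    G.IsVertexCutSet (G.neighborSet a) := by
  intro h
  obtain ⟨p⟩ := h ⟨a, G.notMem_neighborSet_self⟩ ⟨w, hnadj⟩
  cases p with
  | nil => exact hne rfl
  | @cons _ b _ hadj _ => exact b.2 hadj

lemma neighborSet_diff_eq_of_forall_not_adj [Finite V] {a b : V} {S : Set V} (hab : G.Adj a b)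
    (hS : S.ncard ≤ G.vertexConnectivity - 1) (hnadj : ∀ x ∉ ({a, b} : Set V) ∪ S, ¬ G.Adj a x)
    (hne : (({a, b} : Set V) ∪ S)ᶜ.Nonempty) :
    G.neighborSet a \ {b} = S := by
  have hsub : G.neighborSet a \ {b} ⊆ S := by
    rintro z ⟨haz, hzb⟩
    by_contra hzS
    refine hnadj z ?_ haz
    simp only [Set.mem_union, Set.mem_insert_iff, Set.mem_singleton_iff, not_or]
    exact ⟨⟨(G.ne_of_adj haz).symm, hzb⟩, hzS⟩
  obtain ⟨w, hw⟩ := hne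
  have hwa : a ≠ w := by rintro rfl; simp at hw
  have hk := vertexConnectivity_le_ncard (isVertexCutSet_neighborSet hwa (hnadj w hw))
  have hcard := Set.ncard_sdiff_singleton_add_one (show b ∈ G.neighborSet a from hab)
    (Set.toFinite _)
  exact Set.eq_of_subset_of_ncard_le hsub (by omega) (Set.toFinite _)

/-- The walk from `a` to `b` first leaves `t` along an edge `z w` with `z ∈ t`, `w ∈ s \ t`. -/
lemma reachable_induce_of_reachable_boundary {s t : Set V} {x : t}
    (hboundary : ∀ z (hz : z ∈ t), ∀ w ∈ s, w ∉ t → G.Adj z w →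
      (G.induce t).Reachable ⟨z, hz⟩ x)
    {a b : s} (hab : (G.induce s).Reachable a b) (ha : a.1 ∈ t) (hb : b.1 ∉ t) :
    (G.induce t).Reachable ⟨a, ha⟩ x := by
  obtain ⟨p⟩ := hab
  induction p with
  | nil => exact absurd ha hb
  | @cons a c b hac _ ih =>
    by_cases hc : c.1 ∈ t
    · exact (show (G.induce t).Adj ⟨a, ha⟩ ⟨c, hc⟩ from hac).reachable.trans (ih hc hb)
    · exact hboundary a ha c c.2 hc hac

lemma IsBisimplicialEdge.reachable_induce {u v : V} (huv : G.IsBisimplicialEdge u v)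
    {t : Set V} {x y z : V} (hx : x ∈ t) (hy : y ∈ t) (hz : z ∈ t)
    (hux : G.Adj u x) (hvy : G.Adj v y) (hzuv : G.Adj u z ∨ G.Adj v z) :
    (G.induce t).Reachable ⟨z, hz⟩ ⟨x, hx⟩ := by
  have hstep : ∀ {a b} (ha : a ∈ t) (hb : b ∈ t), G.Adj u a → G.Adj v b →
      (G.induce t).Reachable ⟨a, ha⟩ ⟨b, hb⟩ := by
    intro a b ha hb hua hvb
    by_cases hab : a = b
    · subst hab; rfl
    · exact Adj.reachable (huv.2 a b hua hvb hab)
  rcases hzuv with huz | hvz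
  · exact (hstep hz hy huz hvy).trans (hstep hx hy hux hvy).symm
  · exact (hstep hx hz hux hvz).symm

lemma IsBisimplicialEdge.isVertexCutSet {u v : V} (huv : G.IsBisimplicialEdge u v) {S : Set V}
    (huS : u ∉ S) (hcut : ¬ (G.induce (({u, v} : Set V) ∪ S)ᶜ).Preconnected)
    (hu : ∃ x ∉ ({u, v} : Set V) ∪ S, G.Adj u x) (hv : ∃ y ∉ ({u, v} : Set V) ∪ S, G.Adj v y) :
    G.IsVertexCutSet S := by
  obtain ⟨x, hx, hux⟩ := hu
  obtain ⟨y, hy, hvy⟩ := hv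
  have hboundary : ∀ z (hz : z ∈ (({u, v} : Set V) ∪ S)ᶜ), ∀ w ∈ Sᶜ,
      w ∉ (({u, v} : Set V) ∪ S)ᶜ → G.Adj z w →
      (G.induce (({u, v} : Set V) ∪ S)ᶜ).Reachable ⟨z, hz⟩ ⟨x, hx⟩ := by
    intro z hz w hwS hw hzw
    refine huv.reachable_induce hx hy hz hux hvy ?_
    simp only [Set.mem_compl_iff, not_not, Set.mem_union, Set.mem_insert_iff,
      Set.mem_singleton_iff] at hw
    rcases hw with (rfl | rfl) | hwS'
    · exact Or.inl hzw.symm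
    · exact Or.inr hzw.symm
    · exact absurd hwS' hwS
  intro hpre
  have hreach : ∀ d : ↥(({u, v} : Set V) ∪ S)ᶜ,
      (G.induce (({u, v} : Set V) ∪ S)ᶜ).Reachable d ⟨x, hx⟩ := fun d =>
    reachable_induce_of_reachable_boundary hboundary
      (hpre ⟨d, fun hd => d.2 (Or.inr hd)⟩ ⟨u, huS⟩) d.2 (by simp)
  exact hcut fun a b => (hreach a).trans (hreach b).symm

end SimpleGraph

theorem stmt5_general [Finite V] (G : SimpleGraph V) (k : ℕ)
    (hk : G.vertexConnectivity = k) (hk1 : 1 ≤ k)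
    (u v : V) (huv : G.IsBisimplicialEdge u v)
    (S : Set V) (hS : S ⊆ ({u, v} : Set V)ᶜ)
    (hcut : ¬ (G.induce (({u, v} : Set V) ∪ S)ᶜ).Preconnected)
    (hScard : S.ncard = k - 1) :
    G.neighborSet u \ {v} = S ∨ G.neighborSet v \ {u} = S := by
  have hW : (({u, v} : Set V) ∪ S)ᶜ.Nonempty := by
    by_contra hW
    exact hcut fun a _ => (hW ⟨a, a.2⟩).elim
  by_cases hu : ∃ x ∉ ({u, v} : Set V) ∪ S, G.Adj u x
  · by_cases hv : ∃ y ∉ ({u, v} : Set V) ∪ S, G.Adj v y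
    · have huS : u ∉ S := fun h => hS h (Or.inl rfl)
      have := vertexConnectivity_le_ncard (huv.isVertexCutSet huS hcut hu hv)
      omega
    · push Not at hv
      rw [Set.pair_comm] at hv hW
      exact Or.inr (neighborSet_diff_eq_of_forall_not_adj huv.1.symm (by omega) hv hW)
  · push Not at hu
    exact Or.inl (neighborSet_diff_eq_of_forall_not_adj huv.1 (by omega) hu hW)

theorem stmt5 [Finite V] (G : SimpleGraph V) (hbip : G.Colorable 2) (k : ℕ)
    (hk : G.vertexConnectivity = k) (hk1 : 1 ≤ k) (hcard : 3 ≤ Nat.card V)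
    (u v : V) (huv : G.IsBisimplicialEdge u v)
    (S : Set V) (hS : S ⊆ ({u, v} : Set V)ᶜ)
    (hcut : ¬ (G.induce (({u, v} : Set V) ∪ S)ᶜ).Preconnected)
    (hScard : S.ncard = k - 1) :
    G.neighborSet u \ {v} = S ∨ G.neighborSet v \ {u} = S :=
  stmt5_general G k hk hk1 u v huv S hS hcut hScard
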